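/- Let {G_n} be a sequence of finite connected graphs with |V_n| → ∞, degrees bounded between 1 and d, and λ₁(G_n) ≥ λ > 0 for all n (a sequence of expanders). Let Y be a complete CAT(0) space with λ₁(G,Y) ≥ (1/2)λ₁(G) for all finite graphs G (e.g., a complete CAT(0) cube complex). Then there is no uniform embedding of {G_n} into Y: there exist no maps f_n : V_n → Y and unbounded non-decreasing ρ₁, ρ₂ with ρ₁(d_{G_n}(x,x')) ≤ d_Y(f_n(x), f_n(x')) ≤ ρ₂(d_{G_n}(x,x')) for all n, x, x'. -/

import Mathlib

/-!
The Poincaré-type inequality defining `λ₁(G_n, Y) ≥ λ/2` bounds the mean square distance of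
the image of `f_n` to a barycenter `ȳ` by `ρ₂(1)² d / λ`, since every edge is stretched by at most
`ρ₂(1)`. By Markov's inequality, more than half of the vertices of `G_n` are then mapped into a
ball of fixed radius `r` around `ȳ`. As `ρ₁` is unbounded, those vertices are at graph distance at
most some fixed `k` from each other, so they lie in a graph ball with at most `(d + 1) ^ k`
vertices. This contradicts `|V_n| → ∞`.
-/

open Finset Filter

section
variable {V : Type*} [Fintype V] [DecidableEq V]

/-- The Dirichlet energy `∑_{{u,v}∈E} (φ(u)-φ(v))²` of a real-valued map. -/
noncomputable def graphEnergy (G : SimpleGraph V) [DecidableRel G.Adj] (φ : V → ℝ) : ℝ :=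
  (1 / 2) * ∑ u : V, ∑ v : V, if G.Adj u v then (φ u - φ v) ^ 2 else 0

/-- The degree-weighted mean `φ̄ = ∑_v (deg v / (2|E|)) φ(v)`. -/
noncomputable def graphMean (G : SimpleGraph V) [DecidableRel G.Adj] (φ : V → ℝ) : ℝ :=
  ∑ v : V, ((G.degree v : ℝ) / (2 * (G.edgeFinset.card : ℝ))) * φ v

/-- The first positive eigenvalue `λ₁(G)` of the normalized combinatorial Laplacian,
defined variationally over nonconstant real-valued functions. -/
noncomputable def lamOne (G : SimpleGraph V) [DecidableRel G.Adj] : ℝ :=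
  sInf {r : ℝ | ∃ φ : V → ℝ, (¬ ∀ u v, φ u = φ v) ∧
    r = graphEnergy G φ / ∑ v : V, (G.degree v : ℝ) * (φ v - graphMean G φ) ^ 2}

end

theorem SimpleGraph.Connected.exists_adj_dist_lt {V : Type*} {G : SimpleGraph V}
    (hconn : G.Connected) {x v : V} (hne : x ≠ v) : ∃ w, G.Adj v w ∧ G.dist x w < G.dist x v := by
  obtain ⟨p, hp⟩ := hconn.exists_walk_length_eq_dist v x
  cases p with
  | nil => exact absurd rfl hne
  | cons hadj q =>
    refine ⟨_, hadj, ?_⟩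
    rw [G.dist_comm, G.dist_comm (u := x), ← hp, SimpleGraph.Walk.length_cons]
    exact Nat.lt_succ_of_le (SimpleGraph.dist_le q)

theorem SimpleGraph.Connected.card_filter_dist_le_le_pow {V : Type*} [Fintype V]
    [DecidableEq V] {G : SimpleGraph V} [DecidableRel G.Adj] (hconn : G.Connected) {d : ℕ} (hdeg : ∀ v, G.degree v ≤ d)
    (x : V) (k : ℕ) : #{v | G.dist x v ≤ k} ≤ (d + 1) ^ k := by
  induction k with
  | zero =>
    calc #{v | G.dist x v ≤ 0} ≤ #{x} := card_le_card fun v hv => by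
          simpa [hconn.dist_eq_zero_iff, eq_comm] using hv
      _ = (d + 1) ^ 0 := by simp
  | succ k ih =>
    have hsub : ({v | G.dist x v ≤ k + 1} : Finset V) ⊆
        ({v | G.dist x v ≤ k} : Finset V).biUnion fun w => insert w (G.neighborFinset w) := by
      intro v hv
      simp only [mem_filter, mem_univ, true_and] at hv
      rcases eq_or_ne x v with rfl | hne
      · exact mem_biUnion.mpr ⟨x, by simp, mem_insert_self _ _⟩
      obtain ⟨w, hadj, hlt⟩ := hconn.exists_adj_dist_lt hne
      exact mem_biUnion.mpr ⟨w, by simp only [mem_filter, mem_univ, true_and]; omega,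
        mem_insert_of_mem ((G.mem_neighborFinset w v).mpr hadj.symm)⟩
    calc #{v | G.dist x v ≤ k + 1} ≤ #{v | G.dist x v ≤ k} * (d + 1) :=
          (card_le_card hsub).trans <| card_biUnion_le_card_mul _ _ _ fun w _ =>
            (card_insert_le _ _).trans (by simpa [G.card_neighborFinset_eq_degree] using hdeg w)
      _ ≤ (d + 1) ^ (k + 1) := by rw [pow_succ]; gcongr

theorem SimpleGraph.sum_sum_ite_adj_le {V : Type*} [Fintype V] (G : SimpleGraph V)
    [DecidableRel G.Adj] {d : ℕ} (hdeg : ∀ v, G.degree v ≤ d)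
    {g : V → V → ℝ} {c : ℝ} (hc : 0 ≤ c) (hg : ∀ u v, G.Adj u v → g u v ≤ c) :
    ∑ u, ∑ v, (if G.Adj u v then g u v else 0) ≤ Fintype.card V * (d * c) := by
  calc ∑ u, ∑ v, (if G.Adj u v then g u v else 0) ≤ ∑ _u : V, (d * c : ℝ) := by
        refine sum_le_sum fun u _ => ?_
        rw [← sum_filter, ← G.neighborFinset_eq_filter]
        calc ∑ v ∈ G.neighborFinset u, g u v ≤ #(G.neighborFinset u) • c :=
              sum_le_card_nsmul _ _ _ fun v hv => hg u v ((G.mem_neighborFinset u v).mp hv)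
          _ ≤ d * c := by
              rw [nsmul_eq_mul, G.card_neighborFinset_eq_degree]
              gcongr
              exact_mod_cast hdeg u
    _ = Fintype.card V * (d * c) := by simp

theorem card_lt_two_mul_card_filter_le {V : Type*} [Fintype V] [Nonempty V] {w : V → ℝ}
    {C T : ℝ} (hw : ∀ v, 0 ≤ w v) (hsum : ∑ v, w v ≤ C * Fintype.card V) (hT : 2 * C < T) :
    Fintype.card V < 2 * #{v | w v ≤ T} := by
  have hN : (0 : ℝ) < Fintype.card V := by exact_mod_cast Fintype.card_pos
  have hC : 0 ≤ C := nonneg_of_mul_nonneg_left ((sum_nonneg fun v _ => hw v).trans hsum) hN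
  have hsplit : (#{v | w v ≤ T} : ℝ) + #{v | ¬ w v ≤ T} = Fintype.card V := by
    exact_mod_cast card_filter_add_card_filter_not _
  have hbad : #{v | ¬ w v ≤ T} • T ≤ C * Fintype.card V :=
    calc #{v | ¬ w v ≤ T} • T ≤ ∑ v ∈ {v | ¬ w v ≤ T}, w v :=
          card_nsmul_le_sum _ _ _ fun v hv => (not_le.mp (mem_filter.mp hv).2).le
      _ ≤ ∑ v, w v := sum_le_sum_of_subset_of_nonneg (filter_subset _ _) fun v _ _ => hw v
      _ ≤ C * Fintype.card V := hsum
  rw [nsmul_eq_mul] at hbad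
  exact_mod_cast (show (Fintype.card V : ℝ) < 2 * #{v | w v ≤ T} by nlinarith)

section Embedding

variable {V : Type*} [Fintype V] (G : SimpleGraph V) [DecidableRel G.Adj]
  {Y : Type*} [PseudoMetricSpace Y]

theorem sum_dist_sq_le_of_poincare {d : ℕ} (hdeg : ∀ v, G.degree v ≤ d)
    (hdeg1 : ∀ v, 1 ≤ G.degree v) {f : V → Y} {y : Y} {c lam μ : ℝ} (hlam : 0 < lam)
    (hμ : lam / 2 ≤ μ) (hc : 0 ≤ c) (hedge : ∀ u v, G.Adj u v → dist (f u) (f v) ^ 2 ≤ c)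
    (hy : μ * ∑ v, (G.degree v : ℝ) * dist (f v) y ^ 2 ≤
      (1 / 2) * ∑ u, ∑ v, if G.Adj u v then dist (f u) (f v) ^ 2 else 0) :
    ∑ v, dist (f v) y ^ 2 ≤ c * d / lam * Fintype.card V := by
  have hweight : ∑ v, dist (f v) y ^ 2 ≤ ∑ v, (G.degree v : ℝ) * dist (f v) y ^ 2 :=
    sum_le_sum fun v _ => le_mul_of_one_le_left (sq_nonneg _) (by exact_mod_cast hdeg1 v)
  have henergy := G.sum_sum_ite_adj_le hdeg hc hedge
  rw [div_mul_eq_mul_div, le_div_iff₀ hlam]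
  nlinarith [sum_nonneg fun v (_ : v ∈ univ) => sq_nonneg (dist (f v) y)]

theorem exists_card_lt_two_mul_card_filter_dist_le [Nonempty V] {d : ℕ}
    (hdeg : ∀ v, G.degree v ≤ d) (hdeg1 : ∀ v, 1 ≤ G.degree v) {f : V → Y}
    {c lam μ r : ℝ} (hlam : 0 < lam) (hμ : lam / 2 ≤ μ) (hc : 0 ≤ c)
    (hedge : ∀ u v, G.Adj u v → dist (f u) (f v) ^ 2 ≤ c) (hr0 : 0 ≤ r)
    (hr : 2 * (c * d / lam) < r ^ 2)
    (hpoincare : (¬ ∀ u v, f u = f v) → ∃ y : Y,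
      μ * ∑ v, (G.degree v : ℝ) * dist (f v) y ^ 2 ≤
        (1 / 2) * ∑ u, ∑ v, if G.Adj u v then dist (f u) (f v) ^ 2 else 0) :
    ∃ y : Y, Fintype.card V < 2 * #{v | dist (f v) y ≤ r} := by
  by_cases hconst : ∀ u v, f u = f v
  · obtain ⟨v₀⟩ := ‹Nonempty V›
    refine ⟨f v₀, ?_⟩
    rw [filter_true_of_mem fun v _ => by rw [hconst v v₀, dist_self]; exact hr0, card_univ]
    have := Fintype.card_pos (α := V)
    omega
  obtain ⟨y, hy⟩ := hpoincare hconst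
  refine ⟨y, ?_⟩
  have hsum := sum_dist_sq_le_of_poincare G hdeg hdeg1 hlam hμ hc hedge hy
  simpa only [sq_le_sq₀ dist_nonneg hr0] using
    card_lt_two_mul_card_filter_le (fun v => sq_nonneg (dist (f v) y)) hsum hr

theorem card_filter_dist_le_le_pow_of_le_dist [DecidableEq V] (hconn : G.Connected) {d : ℕ}
    (hdeg : ∀ v, G.degree v ≤ d) {f : V → Y} {ρ : ℝ → ℝ} (hρ : MonotoneOn ρ (Set.Ici 0))
    (hf : ∀ x x', ρ (G.dist x x') ≤ dist (f x) (f x')) {r t : ℝ} (ht0 : 0 ≤ t)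
    (ht : 2 * r < ρ t) (y : Y) : #{v | dist (f v) y ≤ r} ≤ (d + 1) ^ ⌈t⌉₊ := by
  rcases eq_empty_or_nonempty ({v | dist (f v) y ≤ r} : Finset V) with hempty | ⟨x, hx⟩
  · simp [hempty]
  refine (card_le_card fun w hw => ?_).trans (hconn.card_filter_dist_le_le_pow hdeg x ⌈t⌉₊)
  simp only [mem_filter, mem_univ, true_and] at hx hw ⊢
  by_contra! hfar
  have htw : t ≤ G.dist x w := (Nat.le_ceil t).trans (by exact_mod_cast hfar.le)
  have hclose : dist (f x) (f w) ≤ 2 * r := by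
    linarith [dist_triangle_right (f x) (f w) y]
  linarith [hρ (Set.mem_Ici.mpr ht0) (Set.mem_Ici.mpr (ht0.trans htw)) htw, hf x w]

end Embedding

/-- `lamY n` stands for Wang's invariant `λ₁(G_n, Y)`, encoded through `hwang`: as an infimum of
Rayleigh quotients it bounds each quotient from below at the barycenter `ybar`. -/
theorem no_uniform_embedding_of_expanders_into_cat0_general
    (V : ℕ → Type) [∀ n, Fintype (V n)] [∀ n, DecidableEq (V n)]
    (G : ∀ n, SimpleGraph (V n)) [∀ n, DecidableRel (G n).Adj]
    (hconn : ∀ n, (G n).Connected)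
    (d : ℕ) (hdeg : ∀ n v, (G n).degree v ≤ d) (hdeg1 : ∀ n v, 1 ≤ (G n).degree v)
    (hcard : Tendsto (fun n => Fintype.card (V n)) atTop atTop)
    (lam : ℝ) (hlam : 0 < lam) (hexp : ∀ n, lam ≤ lamOne (G n))
    {Y : Type*} [MetricSpace Y]
    (lamY : ℕ → ℝ)
    (hlamY : ∀ n, lamOne (G n) / 2 ≤ lamY n)
    (hwang : ∀ n (φ : V n → Y), (¬ ∀ u v, φ u = φ v) → ∃ ybar : Y,
      lamY n * ∑ v : V n, ((G n).degree v : ℝ) * dist (φ v) ybar ^ 2 ≤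
        (1 / 2) * ∑ u : V n, ∑ v : V n,
          if (G n).Adj u v then dist (φ u) (φ v) ^ 2 else 0) :
    ¬ ∃ (f : ∀ n, V n → Y) (ρ₁ ρ₂ : ℝ → ℝ),
        MonotoneOn ρ₁ (Set.Ici 0) ∧ MonotoneOn ρ₂ (Set.Ici 0) ∧
        (∀ M : ℝ, ∃ t : ℝ, 0 ≤ t ∧ M < ρ₁ t) ∧
        (∀ M : ℝ, ∃ t : ℝ, 0 ≤ t ∧ M < ρ₂ t) ∧
        ∀ n (x x' : V n),
          ρ₁ ((G n).dist x x' : ℝ) ≤ dist (f n x) (f n x') ∧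
            dist (f n x) (f n x') ≤ ρ₂ ((G n).dist x x' : ℝ) := by
  rintro ⟨f, ρ₁, ρ₂, hρ₁, -, hρ₁_unbdd, -, hf⟩
  set c := ρ₂ 1 ^ 2
  set r := 2 * (c * d / lam) + 1
  have hbound_nonneg : 0 ≤ 2 * (c * d / lam) := by positivity
  obtain ⟨t, ht0, ht⟩ := hρ₁_unbdd (2 * r)
  obtain ⟨n, hn⟩ := (hcard.eventually_ge_atTop (2 * (d + 1) ^ ⌈t⌉₊)).exists
  have : Nonempty (V n) := Fintype.card_pos_iff.mp (hn.trans_lt' (by positivity))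
  have hedge (u v : V n) (hadj : (G n).Adj u v) : dist (f n u) (f n v) ^ 2 ≤ c := by
    have hle := (hf n u v).2
    rw [SimpleGraph.dist_eq_one_iff_adj.mpr hadj, Nat.cast_one] at hle
    exact pow_le_pow_left₀ dist_nonneg hle 2
  obtain ⟨y, hy⟩ := exists_card_lt_two_mul_card_filter_dist_le (G n) (r := r) (hdeg n) (hdeg1 n)
    hlam (by linarith [hexp n, hlamY n]) (sq_nonneg _) hedge (by positivity)
    (by nlinarith) (hwang n (f n))
  have hball := card_filter_dist_le_le_pow_of_le_dist (G n) (hconn n) (hdeg n) hρ₁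
    (fun x x' => (hf n x x').1) ht0 ht y
  omega

/-- a sequence of expanders (`|V_n| → ∞`, degrees in `[1,d]`,
`λ₁(G_n) ≥ λ > 0`) admits no uniform embedding into a complete CAT(0) space `Y`
whose Wang invariants satisfy `λ₁(G,Y) ≥ λ₁(G)/2` for all finite graphs `G`
(e.g. a complete CAT(0) cube complex); here `lamY n` denotes `λ₁(G_n, Y)`, which,
being an infimum of Rayleigh quotients, bounds each quotient from below via the
barycenter `ybar` of the pushforward measure. -/
theorem no_uniform_embedding_of_expanders_into_cat0
    (V : ℕ → Type) [∀ n, Fintype (V n)] [∀ n, DecidableEq (V n)]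
    (G : ∀ n, SimpleGraph (V n)) [∀ n, DecidableRel (G n).Adj]
    (hconn : ∀ n, (G n).Connected)
    (d : ℕ) (hdeg : ∀ n v, (G n).degree v ≤ d) (hdeg1 : ∀ n v, 1 ≤ (G n).degree v)
    (hcard : Tendsto (fun n => Fintype.card (V n)) atTop atTop)
    (lam : ℝ) (hlam : 0 < lam) (hexp : ∀ n, lam ≤ lamOne (G n))
    {Y : Type*} [MetricSpace Y] [CompleteSpace Y]
    (hcat : ∀ x y : Y, ∃ mid : Y, dist x mid = dist x y / 2 ∧ dist y mid = dist x y / 2 ∧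
      ∀ z : Y, dist z mid ^ 2 ≤ (dist z x ^ 2 + dist z y ^ 2) / 2 - dist x y ^ 2 / 4)
    (lamY : ℕ → ℝ)
    (hlamY : ∀ n, lamOne (G n) / 2 ≤ lamY n)
    (hwang : ∀ n (φ : V n → Y), (¬ ∀ u v, φ u = φ v) → ∃ ybar : Y,
      lamY n * ∑ v : V n, ((G n).degree v : ℝ) * dist (φ v) ybar ^ 2 ≤
        (1 / 2) * ∑ u : V n, ∑ v : V n,
          if (G n).Adj u v then dist (φ u) (φ v) ^ 2 else 0) :
    ¬ ∃ (f : ∀ n, V n → Y) (ρ₁ ρ₂ : ℝ → ℝ),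
        MonotoneOn ρ₁ (Set.Ici 0) ∧ MonotoneOn ρ₂ (Set.Ici 0) ∧
        (∀ M : ℝ, ∃ t : ℝ, 0 ≤ t ∧ M < ρ₁ t) ∧
        (∀ M : ℝ, ∃ t : ℝ, 0 ≤ t ∧ M < ρ₂ t) ∧
        ∀ n (x x' : V n),
          ρ₁ ((G n).dist x x' : ℝ) ≤ dist (f n x) (f n x') ∧
            dist (f n x) (f n x') ≤ ρ₂ ((G n).dist x x' : ℝ) :=
  no_uniform_embedding_of_expanders_into_cat0_general V G hconn d hdeg hdeg1 hcard lam hlam hexp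
    lamY hlamY hwang
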